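/- Weight of a monomial times a linear form: let I, J ⊆ [n] be disjoint subsets with J nonempty and |I| = n₁. Then the Boolean function f : 𝔽₂ⁿ → 𝔽₂ defined by f(a) = (∏_{i ∈ I} a_i) · (∑_{j ∈ J} a_j) has Hamming weight w_H(f) = 2^{n − n₁ − 1}. Moreover, in the quotient ring R_n = 𝔽₂[X_1, …, X_n]/⟨X_1², …, X_n²⟩, the image of X^I (∑_{j ∈ J} X_j) · ∏_{i=1}^{n}(1 + X_i) equals the image of X^I · ∏_{k ∈ [n] ∖ (I ∪ J)}(1 + X_k) · (∑_{K ⊆ J, |K| odd} ∏_{k ∈ K} X_k). -/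

import Mathlib

/-!
Write `σ(a) = ∑_{j ∈ J} a_j`. The function is `1` exactly on the vectors with `a_i = 1` for
`i ∈ I` and `σ(a) = 1`. These `2^{n - n₁}` vectors are permuted by flipping a fixed coordinate
`j₀ ∈ J`, which lies outside `I` and changes `σ`, so exactly half of them have `σ(a) = 1`.

For the ring identity, write `x_i` for the image of `X_i`; then `x_i² = 0` and `2 = 0`. Hence
`x_i (1 + x_i) = x_i` absorbs the factors `1 + x_i` with `i ∈ I`, and
`(∑_{j ∈ J} x_j) ∏_{j ∈ J} (1 + x_j)` is the sum of the `x^K` over the odd subsets `K ⊆ J`,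
by induction on `J`.
-/

/-- The Hamming weight of a Boolean function. -/
def hammingWeight {n : ℕ} (f : (Fin n → ZMod 2) → ZMod 2) : ℕ :=
  (Finset.univ.filter fun a : Fin n → ZMod 2 => f a = 1).card

/-- The ideal `⟨X_1², …, X_n²⟩`. -/
noncomputable def sqIdeal (n : ℕ) : Ideal (MvPolynomial (Fin n) (ZMod 2)) :=
  Ideal.span (Set.range fun i : Fin n => (MvPolynomial.X i) ^ 2)

open Finset

section Counting

theorem two_mul_card_filter_eq_one {α : Type*} {S : Finset α} {f : α → ZMod 2} {τ : α → α}
    (hτ : Function.Involutive τ) (hS : ∀ a ∈ S, τ a ∈ S) (hf : ∀ a, f (τ a) = f a + 1) :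
    2 * #{a ∈ S | f a = 1} = #S := by
  have hflip : ∀ a, f (τ a) = 1 ↔ ¬f a = 1 := fun a => by
    rw [hf]
    generalize f a = z
    revert z
    decide
  have hhalf : #{a ∈ S | f a = 1} = #{a ∈ S | ¬f a = 1} := by
    refine card_nbij' τ τ ?_ ?_ (fun a _ => hτ a) (fun a _ => hτ a) <;>
    · intro a ha
      simp only [coe_filter, Set.mem_ofPred_eq] at ha ⊢
      refine ⟨hS a ha.1, ?_⟩
      simpa [hflip, hτ a] using ha.2
  rw [two_mul]
  nth_rw 2 [hhalf]
  exact card_filter_add_card_filter_not _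

theorem prod_eq_one_iff_zmod_two {ι : Type*} (s : Finset ι) (a : ι → ZMod 2) :
    ∏ i ∈ s, a i = 1 ↔ ∀ i ∈ s, a i = 1 := by
  have h : ∀ z : ZMod 2, z = 1 ↔ z ≠ 0 := by decide
  simp only [h, prod_ne_zero_iff]

theorem mul_eq_one_iff_zmod_two (p q : ZMod 2) : p * q = 1 ↔ p = 1 ∧ q = 1 := by
  revert p q
  decide

variable {ι : Type*} [Fintype ι] [DecidableEq ι]

theorem card_piFinset_ite_singleton_univ (I : Finset ι) :
    #(Fintype.piFinset fun i => if i ∈ I then {1} else (univ : Finset (ZMod 2))) =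
      2 ^ (Fintype.card ι - #I) := by
  rw [Fintype.card_piFinset, ← card_compl, ← prod_const, ← prod_mul_prod_compl I]
  have hI : ∀ i ∈ I, #(if i ∈ I then {1} else (univ : Finset (ZMod 2))) = 1 := by
    intro i hi
    simp [hi]
  have hIc : ∀ i ∈ Iᶜ, #(if i ∈ I then {1} else (univ : Finset (ZMod 2))) = 2 := by
    intro i hi
    simp [mem_compl.mp hi]
  rw [prod_congr rfl hI, prod_congr rfl hIc, prod_const_one, one_mul]

theorem card_filter_prod_mul_sum_eq_one {I J : Finset ι} (hIJ : Disjoint I J)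
    (hJ : J.Nonempty) :
    #{a : ι → ZMod 2 | (∏ i ∈ I, a i) * (∑ j ∈ J, a j) = 1} =
      2 ^ (Fintype.card ι - #I - 1) := by
  obtain ⟨j₀, hj₀⟩ := hJ
  have hj₀I : j₀ ∉ I := disjoint_right.mp hIJ hj₀
  set S := Fintype.piFinset fun i => if i ∈ I then {1} else (univ : Finset (ZMod 2))
  have hfilter : ({a : ι → ZMod 2 | (∏ i ∈ I, a i) * (∑ j ∈ J, a j) = 1} : Finset _) =
      {a ∈ S | ∑ j ∈ J, a j = 1} := by
    ext a
    simp only [S, mem_filter, mem_univ, true_and, Fintype.mem_piFinset,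
      mul_eq_one_iff_zmod_two, prod_eq_one_iff_zmod_two]
    congr! 1
    refine forall_congr' fun i => ?_
    split_ifs with hi <;> simp [hi]
  have hhalf : 2 * #{a ∈ S | ∑ j ∈ J, a j = 1} = #S := by
    refine two_mul_card_filter_eq_one (τ := fun a => a + Pi.single j₀ 1) ?_ ?_ ?_
    · intro a
      funext i
      simp only [Pi.add_apply, add_assoc, CharTwo.add_self_eq_zero, add_zero]
    · intro a ha
      simp only [S, Fintype.mem_piFinset] at ha ⊢
      intro i
      by_cases hi : i ∈ I
      · have hij : i ≠ j₀ := fun h => hj₀I (h ▸ hi)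
        simpa [Pi.single_apply, hij] using ha i
      · simp [hi]
    · intro a
      simp only [Pi.add_apply, sum_add_distrib, sum_pi_single', if_pos hj₀]
  have hIlt : #I < Fintype.card ι :=
    card_lt_univ_of_notMem hj₀I
  rw [hfilter, ← Nat.mul_left_cancel_iff two_pos, hhalf, card_piFinset_ite_singleton_univ,
    ← pow_succ', Nat.sub_add_cancel (by omega)]

end Counting

section SquareZero

variable {R ι : Type*} [CommRing R] [DecidableEq ι] (x : ι → R)

theorem sum_powerset_filter_odd_insert {a : ι} {s : Finset ι} (ha : a ∉ s) :
    ∑ K ∈ (insert a s).powerset with Odd #K, ∏ k ∈ K, x k =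
      ∑ K ∈ s.powerset with Odd #K, ∏ k ∈ K, x k +
        x a * ∑ K ∈ s.powerset with Even #K, ∏ k ∈ K, x k := by
  simp only [sum_filter, sum_powerset_insert ha, mul_sum]
  congr 1
  refine sum_congr rfl fun t ht => ?_
  have hat : a ∉ t := fun h => ha (mem_powerset.mp ht h)
  rw [card_insert_of_notMem hat, prod_insert hat]
  simp only [Nat.odd_add_one, Nat.not_odd_iff_even]
  split_ifs <;> simp

omit [DecidableEq ι] in
theorem prod_one_add_eq_sum_even_add_sum_odd (s : Finset ι) :
    ∏ i ∈ s, (1 + x i) =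
      ∑ K ∈ s.powerset with Even #K, ∏ k ∈ K, x k +
        ∑ K ∈ s.powerset with Odd #K, ∏ k ∈ K, x k := by
  rw [prod_one_add, ← sum_filter_add_sum_filter_not _ (fun K => Even #K)]
  simp only [Nat.not_even_iff_odd]

theorem sum_mul_prod_one_add_of_sq_eq_zero (h2 : (2 : R) = 0) (s : Finset ι)
    (hx : ∀ i ∈ s, x i ^ 2 = 0) :
    (∑ i ∈ s, x i) * ∏ i ∈ s, (1 + x i) = ∑ K ∈ s.powerset with Odd #K, ∏ k ∈ K, x k := by
  induction s using Finset.induction_on with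
  | empty => simp [sum_filter]
  | insert a s ha ih =>
    have ih := ih fun i hi => hx i (mem_insert_of_mem hi)
    have hxa := hx a (mem_insert_self a s)
    have hP := prod_one_add_eq_sum_even_add_sum_odd x s
    rw [sum_insert ha, prod_insert ha, sum_powerset_filter_odd_insert x ha]
    linear_combination (1 + x a) * ih + (∏ i ∈ s, (1 + x i)) * hxa + x a * hP +
      (x a * ∑ K ∈ s.powerset with Odd #K, ∏ k ∈ K, x k) * h2

omit [DecidableEq ι] in
theorem prod_mul_prod_one_add_of_sq_eq_zero (s : Finset ι) (hx : ∀ i ∈ s, x i ^ 2 = 0) :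
    (∏ i ∈ s, x i) * ∏ i ∈ s, (1 + x i) = ∏ i ∈ s, x i := by
  rw [← prod_mul_distrib]
  exact prod_congr rfl fun i hi => by linear_combination hx i hi

theorem prod_mul_sum_mul_prod_one_add [Fintype ι] (h2 : (2 : R) = 0) (hx : ∀ i, x i ^ 2 = 0)
    {I J : Finset ι} (hIJ : Disjoint I J) :
    (∏ i ∈ I, x i) * (∑ j ∈ J, x j) * ∏ i, (1 + x i) =
      (∏ i ∈ I, x i) * (∏ k ∈ (I ∪ J)ᶜ, (1 + x k)) *
        ∑ K ∈ J.powerset with Odd #K, ∏ k ∈ K, x k := by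
  rw [← prod_mul_prod_compl (I ∪ J), prod_union hIJ,
    ← sum_mul_prod_one_add_of_sq_eq_zero x h2 J fun j _ => hx j]
  linear_combination ((∑ j ∈ J, x j) * (∏ j ∈ J, (1 + x j)) * ∏ k ∈ (I ∪ J)ᶜ, (1 + x k)) *
    prod_mul_prod_one_add_of_sq_eq_zero x I fun i _ => hx i

end SquareZero

theorem mk_sqIdeal_X_sq {n : ℕ} (i : Fin n) :
    Ideal.Quotient.mk (sqIdeal n) (MvPolynomial.X i) ^ 2 = 0 := by
  rw [← map_pow, Ideal.Quotient.eq_zero_iff_mem]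
  exact Ideal.subset_span ⟨i, rfl⟩

/-- for disjoint `I, J ⊆ [n]` with `J` nonempty and `|I| = n₁`, the
Boolean function `a ↦ (∏_{i ∈ I} a_i)(∑_{j ∈ J} a_j)` has Hamming weight
`2^{n - n₁ - 1}`; moreover in `R_n`, the image of `X^I (∑_{j ∈ J} X_j) ∏_i (1 + X_i)`
equals the image of `X^I ∏_{k ∉ I ∪ J} (1 + X_k) ∑_{K ⊆ J, |K| odd} X^K`. -/
theorem monomial_times_linear {n : ℕ} (I J : Finset (Fin n))
    (hdisj : Disjoint I J) (hJ : J.Nonempty) (n₁ : ℕ) (hn₁ : I.card = n₁) :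
    hammingWeight (fun a : Fin n → ZMod 2 => (∏ i ∈ I, a i) * (∑ j ∈ J, a j)) =
      2 ^ (n - n₁ - 1) ∧
    Ideal.Quotient.mk (sqIdeal n)
        ((∏ i ∈ I, MvPolynomial.X i) * (∑ j ∈ J, MvPolynomial.X j) *
          ∏ i : Fin n, (1 + MvPolynomial.X i)) =
      Ideal.Quotient.mk (sqIdeal n)
        ((∏ i ∈ I, MvPolynomial.X i) *
          (∏ k ∈ (I ∪ J)ᶜ, (1 + MvPolynomial.X k)) *
          ∑ K ∈ J.powerset.filter (fun K => Odd K.card),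
            ∏ k ∈ K, MvPolynomial.X k) := by
  constructor
  · rw [hammingWeight, card_filter_prod_mul_sum_eq_one hdisj hJ, Fintype.card_fin, hn₁]
  · have h2 : (2 : MvPolynomial (Fin n) (ZMod 2) ⧸ sqIdeal n) = 0 := by
      rw [← map_ofNat (Ideal.Quotient.mk (sqIdeal n)) 2,
        CharTwo.two_eq_zero (R := MvPolynomial (Fin n) (ZMod 2)), map_zero]
    simp only [map_mul, map_prod, map_sum, map_add, map_one]
    exact prod_mul_sum_mul_prod_one_add _ h2 mk_sqIdeal_X_sq hdisj
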